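/- (Classification of positive geodesics) Let n ≥ 2 and let v_0, v_1, …, v_l be a path in the Cayley graph X of (Λ, S) such that each step v_{k+1} − v_k lies in S and has type 1, the map k ↦ v_k is injective, and the images of v_0,…,v_l in Λ ⊗ ℝ = ℝ^n/Δ all lie on a single affine line (i.e. the path is a geodesic in the embedded Euclidean space). Then there exists a single index i ∈ {1,…,n} such that v_{k+1} − v_k = s_i for all k = 0,…,l−1; every positive geodesic is of the form g → s_i + g → 2s_i + g → …. -/
import Mathlib


noncomputable section

def diagR (n : ℕ) : Submodule ℝ (Fin n → ℝ) := Submodule.span ℝ {(fun _ => 1 : Fin n → ℝ)}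

abbrev LambdaR (n : ℕ) := (Fin n → ℝ) ⧸ diagR n

def diagZ (n : ℕ) : Submodule ℤ (Fin n → ℤ) := Submodule.span ℤ {(fun _ => 1 : Fin n → ℤ)}

abbrev LambdaZ (n : ℕ) := (Fin n → ℤ) ⧸ diagZ n

/-- The class `s_i` of the standard basis vector `e_i` in `Λ`. -/
def sgen (n : ℕ) (i : Fin n) : LambdaZ n := Submodule.Quotient.mk (Pi.single i 1)

def castLin (n : ℕ) : (Fin n → ℤ) →ₗ[ℤ] (Fin n → ℝ) where
  toFun x := fun i => (x i : ℝ)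
  map_add' x y := by ext i; simp
  map_smul' c x := by ext i; simp

/-- The natural embedding `Λ = ℤ^n/Δ_ℤ → ℝ^n/Δ`. -/
def iotaLambda (n : ℕ) : LambdaZ n →ₗ[ℤ] LambdaR n :=
  Submodule.liftQ (diagZ n)
    ((((diagR n).mkQ).restrictScalars ℤ).comp (castLin n))
    (by
      rw [diagZ, Submodule.span_le]
      intro x hx
      simp only [Set.mem_singleton_iff] at hx
      subst hx
      simp only [SetLike.mem_coe, LinearMap.mem_ker, LinearMap.comp_apply,
        LinearMap.restrictScalars_apply, Submodule.mkQ_apply,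
        Submodule.Quotient.mk_eq_zero]
      exact Submodule.subset_span (by ext i; simp [castLin]))

def typeLin (n : ℕ) : (Fin n → ℤ) →ₗ[ℤ] ZMod n where
  toFun x := ∑ i, (x i : ZMod n)
  map_add' x y := by simp [Finset.sum_add_distrib]
  map_smul' c x := by simp [Finset.mul_sum]

/-- The type of an element of `Λ`: the sum of the coordinates mod `n`. -/
def typeQ (n : ℕ) : LambdaZ n →ₗ[ℤ] ZMod n :=
  Submodule.liftQ (diagZ n) (typeLin n)
    (by
      rw [diagZ, Submodule.span_le]
      intro x hx
      simp only [Set.mem_singleton_iff] at hx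
      subst hx
      simp [typeLin])

/-- The generating set `S = {[a] : max_{i,j} |a_i - a_j| = 1}` of the Cayley graph. -/
def genS (n : ℕ) : Set (LambdaZ n) :=
  {a | ∃ x : Fin n → ℤ, Submodule.Quotient.mk x = a ∧
        (∀ i j, |x i - x j| ≤ 1) ∧ (∃ i j, |x i - x j| = 1)}

-- AUX

lemma mem_diagR_iff (n : ℕ) (x : Fin n → ℝ) : x ∈ diagR n ↔ ∃ t : ℝ, x = fun _ => t := by
  rw [diagR, Submodule.mem_span_singleton]
  constructor
  · rintro ⟨t, rfl⟩; exact ⟨t, by funext j; simp⟩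
  · rintro ⟨t, rfl⟩; exact ⟨t, by funext j; simp⟩

lemma mem_diagZ_iff (n : ℕ) (x : Fin n → ℤ) : x ∈ diagZ n ↔ ∃ t : ℤ, x = fun _ => t := by
  rw [diagZ, Submodule.mem_span_singleton]
  constructor
  · rintro ⟨t, rfl⟩; exact ⟨t, by funext j; simp⟩
  · rintro ⟨t, rfl⟩; exact ⟨t, by funext j; simp⟩

lemma iota_mk (n : ℕ) (x : Fin n → ℤ) :
    iotaLambda n (Submodule.Quotient.mk x) =
      Submodule.Quotient.mk (fun i => (x i : ℝ)) := by
  rfl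

lemma iota_sgen (n : ℕ) (i : Fin n) :
    iotaLambda n (sgen n i) = Submodule.Quotient.mk (Pi.single i (1 : ℝ)) := by
  rw [sgen, iota_mk]
  congr 1
  funext j
  by_cases h : j = i <;> simp [h, Pi.single_apply]

lemma iota_sgen_ne_zero (n : ℕ) (hn : 2 ≤ n) (i : Fin n) :
    iotaLambda n (sgen n i) ≠ 0 := by
  rw [iota_sgen, Ne, Submodule.Quotient.mk_eq_zero, mem_diagR_iff]
  rintro ⟨t, ht⟩
  obtain ⟨j, hj⟩ : ∃ j : Fin n, j ≠ i := by
    haveI : Nontrivial (Fin n) := Fin.nontrivial_iff_two_le.mpr hn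
    exact exists_ne i
  have h1 : (Pi.single i (1:ℝ) : Fin n → ℝ) i = t := by rw [ht]
  have h2 : (Pi.single i (1:ℝ) : Fin n → ℝ) j = t := by rw [ht]
  simp [Pi.single_apply, hj] at h1 h2
  rw [← h1] at h2; exact one_ne_zero h2.symm

lemma not_parallel (n : ℕ) (hn : 3 ≤ n) (i j : Fin n) (hij : i ≠ j) (c : ℝ)
    (h : iotaLambda n (sgen n i) = c • iotaLambda n (sgen n j)) : False := by
  rw [iota_sgen, iota_sgen, ← Submodule.Quotient.mk_smul, Submodule.Quotient.eq,
    mem_diagR_iff] at h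
  obtain ⟨t, ht⟩ := h
  obtain ⟨k, hki, hkj⟩ : ∃ k : Fin n, k ≠ i ∧ k ≠ j := by
    by_contra hcon
    push_neg at hcon
    have hsub : (Finset.univ : Finset (Fin n)) ⊆ {i, j} := by
      intro k _
      rcases eq_or_ne k i with h | h
      · simp [h]
      · simp [hcon k h]
    have := Finset.card_le_card hsub
    have h2 : ({i, j} : Finset (Fin n)).card ≤ 2 :=
      le_trans (Finset.card_insert_le _ _) (by simp)
    simp [Finset.card_univ] at this
    omega
  have hI : ((Pi.single i (1:ℝ) : Fin n → ℝ) - c • (Pi.single j (1:ℝ) : Fin n → ℝ)) i = t := by rw [ht]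
  have hK : ((Pi.single i (1:ℝ) : Fin n → ℝ) - c • (Pi.single j (1:ℝ) : Fin n → ℝ)) k = t := by rw [ht]
  simp [Pi.single_apply, hij, Ne.symm hij, hki, hkj] at hI hK
  rw [← hI] at hK; exact one_ne_zero hK.symm

lemma typeQ_mk (n : ℕ) (x : Fin n → ℤ) :
    typeQ n (Submodule.Quotient.mk x) = ∑ i, ((x i : ZMod n)) := rfl

lemma step_classify (n : ℕ) (hn : 2 ≤ n) (a : LambdaZ n) (ha : a ∈ genS n)
    (hta : typeQ n a = 1) : ∃ i, a = sgen n i := by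
  obtain ⟨x, rfl, hb, -⟩ := ha
  have hne : (Finset.univ : Finset (Fin n)).Nonempty := by
    refine ⟨⟨0, by omega⟩, Finset.mem_univ _⟩
  obtain ⟨i₀, -, hmin⟩ := Finset.exists_min_image Finset.univ x hne
  set y : Fin n → ℤ := fun i => x i - x i₀ with hy
  have hy01 : ∀ i, y i = 0 ∨ y i = 1 := by
    intro i
    have h1 := hmin i (Finset.mem_univ i)
    have h2 := (abs_le.mp (hb i i₀)).2
    simp only [hy]
    omega
  have hmkeq : (Submodule.Quotient.mk x : LambdaZ n) = Submodule.Quotient.mk y := by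
    rw [Submodule.Quotient.eq, mem_diagZ_iff]
    exact ⟨x i₀, by funext j; simp [hy]⟩
  rw [hmkeq] at hta ⊢
  set T : Finset (Fin n) := Finset.univ.filter (fun i => y i = 1) with hT
  have hsum : typeQ n (Submodule.Quotient.mk y) = (T.card : ZMod n) := by
    rw [typeQ_mk]
    rw [Finset.card_filter, Nat.cast_sum]
    apply Finset.sum_congr rfl
    intro i _
    rcases hy01 i with h | h <;> simp [h]
  have hi₀T : i₀ ∉ T := by simp [hT, hy]
  have hcard : T.card < n := by
    have : T ⊂ Finset.univ := ⟨Finset.subset_univ T, fun h => hi₀T (h (Finset.mem_univ i₀))⟩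
    have := Finset.card_lt_card this
    simpa [Finset.card_univ] using this
  have hT1 : T.card = 1 := by
    rw [hta] at hsum
    have : ((T.card : ℕ) : ZMod n).val = ((1 : ℕ) : ZMod n).val := by
      rw [← hsum]; norm_num
    rwa [ZMod.val_cast_of_lt hcard, ZMod.val_cast_of_lt (by omega)] at this
  obtain ⟨j, hj⟩ := Finset.card_eq_one.mp hT1
  refine ⟨j, ?_⟩
  rw [sgen]
  congr 1
  funext i
  rcases eq_or_ne i j with h | h
  · subst h
    have : i ∈ T := by rw [hj]; exact Finset.mem_singleton_self i
    simp [hT] at this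
    simp [this]
  · have : i ∉ T := by rw [hj]; simpa using h
    simp [hT] at this
    rcases hy01 i with h0 | h1
    · simp [h0, Pi.single_apply, h]
    · exact absurd h1 this


/-- a positive geodesic in the Cayley graph `X` of `(Λ,S)` — a path with
steps in `S` raising the type by `1`, injective, whose vertices are collinear in
`ℝ^n/Δ` — proceeds in a single coordinate direction: all steps equal one `s_i`. -/
theorem positive_geodesic_classification (n : ℕ) (hn : 2 ≤ n) (l : ℕ)
    (v : ℕ → LambdaZ n)
    (hstep : ∀ k < l, v (k + 1) - v k ∈ genS n)
    (htype : ∀ k < l, typeQ n (v (k + 1)) = typeQ n (v k) + 1)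
    (hinj : ∀ k ≤ l, ∀ k' ≤ l, v k = v k' → k = k')
    (hline : Collinear ℝ {x : LambdaR n | ∃ k ≤ l, x = iotaLambda n (v k)}) :
    ∃ i : Fin n, ∀ k < l, v (k + 1) = sgen n i + v k := by
  -- each step is some sgen
  have hstep' : ∀ k, k < l → ∃ i, v (k + 1) = sgen n i + v k := by
    intro k hk
    have ht : typeQ n (v (k + 1) - v k) = 1 := by
      rw [map_sub, htype k hk]; ring
    obtain ⟨i, hi⟩ := step_classify n hn _ (hstep k hk) ht
    exact ⟨i, by rw [← hi]; abel⟩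
  -- adjacency
  have hadj : ∀ k, k + 1 < l → ∀ i j : Fin n,
      v (k + 1) = sgen n i + v k → v (k + 2) = sgen n j + v (k + 1) →
      sgen n j = sgen n i := by
    intro k hk i j hi hj
    rcases eq_or_ne i j with h | hij
    · rw [h]
    rcases Nat.lt_or_ge n 3 with h2 | h3
    · -- n = 2
      exfalso
      have hn2 : n = 2 := by omega
      subst hn2
      have hsum : sgen 2 j + sgen 2 i = 0 := by
        rw [sgen, sgen, ← Submodule.Quotient.mk_add, Submodule.Quotient.mk_eq_zero,
          mem_diagZ_iff]
        refine ⟨1, ?_⟩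
        fin_cases i <;> fin_cases j <;> simp_all <;> funext m <;> fin_cases m <;> simp
      have hvv : v (k + 2) = v k := by
        rw [hj, hi, ← add_assoc, hsum, zero_add]
      have := hinj (k + 2) (by omega) k (by omega) hvv
      omega
    · -- n ≥ 3 : use collinearity
      exfalso
      have hmem : iotaLambda n (v k) ∈
          {x : LambdaR n | ∃ m ≤ l, x = iotaLambda n (v m)} := ⟨k, by omega, rfl⟩
      rw [collinear_iff_of_mem hmem] at hline
      obtain ⟨d, hd⟩ := hline
      obtain ⟨c1, hc1⟩ := hd _ ⟨k + 1, by omega, rfl⟩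
      obtain ⟨c2, hc2⟩ := hd _ ⟨k + 2, by omega, rfl⟩
      have e1 : iotaLambda n (sgen n i) = c1 • d := by
        have : iotaLambda n (v (k + 1)) = iotaLambda n (sgen n i) + iotaLambda n (v k) := by
          rw [hi, map_add]
        rw [this] at hc1
        have := hc1
        simp only [vadd_eq_add] at this
        linear_combination (norm := module) this
      have e2 : iotaLambda n (sgen n j) = (c2 - c1) • d := by
        have h2 : iotaLambda n (v (k + 2)) =
            iotaLambda n (sgen n j) + iotaLambda n (sgen n i) + iotaLambda n (v k) := by
          rw [hj, map_add, hi, map_add]; abel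
        rw [h2, e1] at hc2
        simp only [vadd_eq_add] at hc2
        rw [sub_smul]
        linear_combination (norm := module) hc2
      have hc1ne : c1 ≠ 0 := by
        intro h; rw [h, zero_smul] at e1; exact iota_sgen_ne_zero n hn i e1
      have hc2ne : c2 - c1 ≠ 0 := by
        intro h; rw [h, zero_smul] at e2; exact iota_sgen_ne_zero n hn j e2
      refine not_parallel n h3 i j hij (c1 / (c2 - c1)) ?_
      rw [e1, e2, smul_smul, div_mul_cancel₀ _ hc2ne]
  -- conclude
  rcases Nat.eq_zero_or_pos l with hl | hl
  · exact ⟨⟨0, by omega⟩, fun k hk => absurd hk (by omega)⟩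
  obtain ⟨i₀, h₀⟩ := hstep' 0 hl
  refine ⟨i₀, ?_⟩
  intro k
  induction k with
  | zero => intro _; exact h₀
  | succ m ih =>
    intro hm
    obtain ⟨j, hj⟩ := hstep' (m + 1) hm
    have hs := hadj m hm i₀ j (ih (by omega)) hj
    rw [hj, hs]
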